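/- arXiv:1503.00523 — 3 statements merged into one kernel-verified Lean document; each statement's English description precedes it below -/
import Mathlib

section
/- Let W be a complex inner product space, d, δ : W → W adjoint linear operators with d² = δ² = 0, and D = 2(d − δ). Suppose W decomposes as W = Ker D² ⊕ Im D² (internal direct sum). Then W = Ker D ⊕ Im d ⊕ Im δ as an internal direct sum of subspaces. -/
local notation "⟪" x ", " y "⟫" => @inner ℂ _ _ x y

lemma triple_orth_aux {W : Type*} [NormedAddCommGroup W] [InnerProductSpace ℂ W]
    (K A B : Submodule ℂ W)
    (hKA : ∀ x ∈ K, ∀ y ∈ A, ⟪x, y⟫ = 0)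
    (hKB : ∀ x ∈ K, ∀ y ∈ B, ⟪x, y⟫ = 0)
    (hAB : ∀ x ∈ A, ∀ y ∈ B, ⟪x, y⟫ = 0) :
    OrthogonalFamily ℂ (fun i => (![K, A, B] i : Submodule ℂ W))
      (fun i => (![K, A, B] i).subtypeₗᵢ) := by
  intro i j hij v w
  fin_cases i <;> fin_cases j <;> (try exact absurd rfl hij)
  · exact hKA v v.2 w w.2
  · exact hKB v v.2 w w.2
  · exact inner_eq_zero_symm.mpr (hKA w w.2 v v.2)
  · exact hAB v v.2 w w.2
  · exact inner_eq_zero_symm.mpr (hKB w w.2 v v.2)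
  · exact inner_eq_zero_symm.mpr (hAB w w.2 v v.2)

theorem stmt_4 {W : Type*} [NormedAddCommGroup W] [InnerProductSpace ℂ W]
    (d δ D : W →ₗ[ℂ] W)
    (hadj : ∀ x y : W, ⟪d x, y⟫ = ⟪x, δ y⟫)
    (hdd : d ∘ₗ d = 0) (hδδ : δ ∘ₗ δ = 0)
    (hD : D = (2 : ℂ) • (d - δ))
    (hdec : IsCompl (LinearMap.ker (D ∘ₗ D)) (LinearMap.range (D ∘ₗ D))) :
    iSupIndep ![LinearMap.ker D, LinearMap.range d, LinearMap.range δ] ∧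
    LinearMap.ker D ⊔ LinearMap.range d ⊔ LinearMap.range δ = ⊤ := by
  have hddx : ∀ x, d (d x) = 0 := fun x => by
    have := LinearMap.ext_iff.mp hdd x; simpa using this
  have hδδx : ∀ x, δ (δ x) = 0 := fun x => by
    have := LinearMap.ext_iff.mp hδδ x; simpa using this
  have hadj' : ∀ x y : W, ⟪δ x, y⟫ = ⟪x, d y⟫ := by
    intro x y
    rw [← inner_conj_symm, ← hadj, inner_conj_symm]
  have hDapp : ∀ x, D x = (2:ℂ) • (d x) - (2:ℂ) • (δ x) := by
    intro x; rw [hD]; simp [smul_sub]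
  have hskew : ∀ x y : W, ⟪D x, y⟫ = -⟪x, D y⟫ := by
    intro x y
    rw [hDapp, hDapp, inner_sub_left, inner_sub_right, inner_smul_left,
      inner_smul_left, inner_smul_right, inner_smul_right, hadj x y, hadj' x y]
    simp [Complex.conj_ofNat]
  -- ker D ⊆ ker d ∩ ker δ
  have hkd : ∀ x, D x = 0 → d x = 0 ∧ δ x = 0 := by
    intro x hx
    rw [hDapp] at hx
    have h2 : (2:ℂ) • (d x - δ x) = 0 := by rw [smul_sub]; exact hx
    have hdx : d x = δ x := by
      rcases smul_eq_zero.mp h2 with h | h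
      · norm_num at h
      · exact sub_eq_zero.mp h
    have : ⟪d x, d x⟫ = 0 := by
      rw [hadj, hdx, hδδx, inner_zero_right]
    have hdx0 : d x = 0 := inner_self_eq_zero.mp this
    exact ⟨hdx0, by rw [← hdx, hdx0]⟩
  -- ker D² ≤ ker D
  have hker2 : LinearMap.ker (D ∘ₗ D) ≤ LinearMap.ker D := by
    intro x hx
    have hx' : D (D x) = 0 := hx
    have : ⟪D x, D x⟫ = 0 := by rw [hskew, hx', inner_zero_right, neg_zero]
    exact inner_self_eq_zero.mp this
  -- range D² ≤ range d ⊔ range δ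
  have hrg : LinearMap.range (D ∘ₗ D) ≤ LinearMap.range d ⊔ LinearMap.range δ := by
    rintro _ ⟨x, rfl⟩
    have hDD : D (D x) = d ((-4:ℂ) • δ x) + δ ((-4:ℂ) • d x) := by
      simp only [hDapp, map_sub, map_smul, hddx, hδδx, smul_zero]
      module
    rw [LinearMap.comp_apply, hDD]
    exact Submodule.add_mem_sup ⟨_, rfl⟩ ⟨_, rfl⟩
  constructor
  · -- independence via orthogonal family
    have okd : ∀ k ∈ LinearMap.ker D, ∀ y ∈ LinearMap.range d, ⟪k, y⟫ = 0 := by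
      rintro k hk _ ⟨y, rfl⟩
      rw [← inner_conj_symm, hadj, (hkd k hk).2, inner_zero_right, map_zero]
    have okδ : ∀ k ∈ LinearMap.ker D, ∀ y ∈ LinearMap.range δ, ⟪k, y⟫ = 0 := by
      rintro k hk _ ⟨y, rfl⟩
      rw [← hadj, (hkd k hk).1, inner_zero_left]
    have odδ : ∀ x ∈ LinearMap.range d, ∀ y ∈ LinearMap.range δ, ⟪x, y⟫ = 0 := by
      rintro _ ⟨x, rfl⟩ _ ⟨y, rfl⟩
      rw [hadj, hδδx, inner_zero_right]
    exact (triple_orth_aux _ _ _ okd okδ odδ).independent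
  · -- sup = top
    have htop : LinearMap.ker (D ∘ₗ D) ⊔ LinearMap.range (D ∘ₗ D) = ⊤ :=
      hdec.sup_eq_top
    rw [eq_top_iff, ← htop]
    apply sup_le
    · exact le_trans hker2 (le_trans le_sup_left le_sup_left)
    · exact le_trans hrg (by rw [sup_assoc]; exact le_sup_right)
end

section
/- Let R be an associative ℂ-algebra, D, z, ζ ∈ R with z − ζ = Da + aD for some a ∈ R. Let W be an R-module and v ∈ Ker D ⊆ W with z·w = χ·w for all w ∈ W (z acts by the scalar χ) and ζ·v = μ·v for a scalar μ. If v represents a nonzero class in Ker D/(Ker D ∩ Im D), then χ = μ. (Abstract form of the infinitesimal character determination by Dirac cohomology.) -/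
theorem stmt_16 {R W : Type*} [Ring R] [Algebra ℂ R] [AddCommGroup W] [Module ℂ W]
    [Module R W] [IsScalarTower ℂ R W]
    (D z ζ a : R) (χ μ : ℂ)
    (hz : ∀ w : W, z • w = χ • w)
    (hrel : z - ζ = D * a + a * D)
    (v : W) (hker : D • v = 0) (hζ : ζ • v = μ • v)
    (hnz : ¬ ∃ u : W, v = D • u) :
    χ = μ := by
  by_contra h
  apply hnz
  have key : (χ - μ) • v = D • (a • v) := by
    have h1 : (z - ζ) • v = D • (a • v) + a • (D • v) := by
      rw [hrel, add_smul, mul_smul, mul_smul]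
    rw [hker, smul_zero, add_zero] at h1
    rw [← h1, sub_smul, sub_smul, hz, hζ]
  refine ⟨(χ - μ)⁻¹ • (a • v), ?_⟩
  have hc : (χ - μ) ≠ 0 := sub_ne_zero.mpr h
  have : D • ((χ - μ)⁻¹ • (a • v)) = (χ - μ)⁻¹ • (D • (a • v)) := by
    rw [algebra_compatible_smul R ((χ - μ)⁻¹) (a • v), ← mul_smul,
      ← Algebra.commutes, mul_smul, ← algebra_compatible_smul]
  rw [this, ← key, ← smul_assoc, smul_eq_mul, inv_mul_cancel₀ hc, one_smul]
end

section
/- Let T be a linear operator on a complex inner product space W with ⟨T²x, x⟩ = −⟨Tx, Tx⟩ for all x (e.g., T anti self-adjoint). If W = Ker T² ⊕ Im T², then Im T² = Im T, and hence W = Ker T ⊕ Im T with Ker T/(Ker T ∩ Im T) ≅ Ker T, i.e., every Dirac cohomology class has a unique harmonic representative. -/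
local notation "⟪" x ", " y "⟫" => @inner ℂ _ _ x y

theorem stmt_19 {W : Type*} [NormedAddCommGroup W] [InnerProductSpace ℂ W]
    (T : W →ₗ[ℂ] W)
    (hT : ∀ x y : W, ⟪T x, y⟫ = -⟪x, T y⟫)
    (hdec : IsCompl (LinearMap.ker (T ∘ₗ T)) (LinearMap.range (T ∘ₗ T))) :
    LinearMap.ker (T ∘ₗ T) = LinearMap.ker T ∧
    LinearMap.range (T ∘ₗ T) = LinearMap.range T ∧
    IsCompl (LinearMap.ker T) (LinearMap.range T) ∧
    Function.Bijective ((LinearMap.range T).comap (LinearMap.ker T).subtype).mkQ := by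
  have hker : LinearMap.ker (T ∘ₗ T) = LinearMap.ker T := by
    apply le_antisymm
    · intro x hx
      have hx' : T (T x) = 0 := hx
      have h1 : ⟪T (T x), x⟫ = -⟪T x, T x⟫ := hT (T x) x
      rw [hx'] at h1
      simp only [inner_zero_left] at h1
      have : ⟪T x, T x⟫ = 0 := neg_eq_zero.mp h1.symm
      simpa [LinearMap.mem_ker] using inner_self_eq_zero.mp this
    · intro x hx
      have hx' : T x = 0 := hx
      simp [LinearMap.mem_ker, LinearMap.comp_apply, hx']
  have hrange : LinearMap.range (T ∘ₗ T) = LinearMap.range T := by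
    apply le_antisymm
    · rintro _ ⟨y, rfl⟩
      exact ⟨T y, rfl⟩
    · rintro _ ⟨x, rfl⟩
      -- write x = k + (T∘T) y
      have hx : x ∈ LinearMap.ker (T ∘ₗ T) ⊔ LinearMap.range (T ∘ₗ T) := by
        rw [hdec.sup_eq_top]; trivial
      rcases Submodule.mem_sup.mp hx with ⟨k, hk, r, hr, rfl⟩
      rcases hr with ⟨y, rfl⟩
      have hk' : T k = 0 := by
        rw [hker] at hk; exact hk
      refine ⟨T y, ?_⟩
      simp [LinearMap.comp_apply, map_add, hk']
  have hcompl : IsCompl (LinearMap.ker T) (LinearMap.range T) := by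
    rw [← hker, ← hrange]; exact hdec
  refine ⟨hker, hrange, hcompl, ?_⟩
  have hbot : (LinearMap.range T).comap (LinearMap.ker T).subtype = ⊥ := by
    rw [Submodule.eq_bot_iff]
    rintro ⟨x, hx⟩ hmem
    have : x ∈ LinearMap.ker T ⊓ LinearMap.range T := ⟨hx, hmem⟩
    rw [hcompl.inf_eq_bot] at this
    exact Subtype.ext this
  constructor
  · rw [← LinearMap.ker_eq_bot, Submodule.ker_mkQ, hbot]
  · exact Submodule.mkQ_surjective _
end
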